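/- arXiv:2509.04212 — 2 statements merged into one kernel-verified Lean document; each statement's English description precedes it below -/
import Mathlib

section
/- Let (c_j)_{j≥0} be a sequence of complex numbers of modulus 1 and, for n ≥ 1, set P_n(z) = (1/√n) ∑_{j=0}^{n−1} c_j z^j for |z| = 1. Then the sequence (P_n) is not ultraflat, i.e. sup_{z ∈ S¹} | |P_n(z)| − 1 | does not converge to 0 as n → ∞. -/
/-!
Write `S_n(t) = ∑_{j<n} c_j e^{ijt}`, so that `P_n(e^{it}) = S_n(t) / √n`, and let
`V_n = ∫₀^{2π} S_n'/S_n`, which is `2πi` times the winding number of `S_n` around `0`.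

If `|P_n| ≈ 1` on the circle, then `|S_{n+1} - S_n| = 1 < |S_n|`, so `S_{n+1}/S_n` stays in the
right half-plane, has a continuous logarithm, and `V_{n+1} = V_n`. On the other hand `1/S_n` is
close to `conj S_n / n`, and by Parseval `∫ S_n' conj S_n = πi n(n-1)`, so `V_n ≈ πi(n-1)` with an
error of at most `πn/6` (using `∫ |S_n'| ≤ 4πn^{3/2}/3`). Thus `V_N = V_{2N}` for large `N` is
impossible.
-/

open Filter MeasureTheory Finset Complex ComplexConjugate intervalIntegral
open scoped Real

theorem integral_div_eq_of_norm_sub_lt {f g f' g' : ℝ → ℂ} {a b : ℝ}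
    (hf : ∀ t, HasDerivAt f (f' t) t) (hg : ∀ t, HasDerivAt g (g' t) t)
    (hf' : Continuous f') (hg' : Continuous g') (hfab : f a = f b) (hgab : g a = g b)
    (hgf : ∀ t, ‖g t - f t‖ < ‖f t‖) :
    ∫ t in a..b, g' t / g t = ∫ t in a..b, f' t / f t := by
  have hf0 (t : ℝ) : f t ≠ 0 := norm_pos_iff.1 ((norm_nonneg _).trans_lt (hgf t))
  have hg0 (t : ℝ) : g t ≠ 0 := fun h => by simpa [h] using hgf t
  -- `‖g/f - 1‖ < 1` keeps `g/f` in the right half-plane, where `log` is holomorphic.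
  have hslit (t : ℝ) : g t / f t ∈ slitPlane := ball_one_subset_slitPlane <| by
    rw [Metric.mem_ball, dist_eq_norm, div_sub_one (hf0 t), norm_div,
      div_lt_one (norm_pos_iff.2 (hf0 t))]
    exact hgf t
  have hlog (t : ℝ) :
      HasDerivAt (fun s => log (g s / f s)) (g' t / g t - f' t / f t) t := by
    convert ((hg t).div (hf t) (hf0 t)).clog_real (hslit t) using 1
    · rfl
    · simp only [Pi.div_apply]
      field_simp [hf0 t, hg0 t]
  have hfc : Continuous f := continuous_iff_continuousAt.2 fun t => (hf t).continuousAt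
  have hgc : Continuous g := continuous_iff_continuousAt.2 fun t => (hg t).continuousAt
  have hgi : IntervalIntegrable (fun t => g' t / g t) volume a b :=
    (hg'.div hgc hg0).intervalIntegrable a b
  have hfi : IntervalIntegrable (fun t => f' t / f t) volume a b :=
    (hf'.div hfc hf0).intervalIntegrable a b
  rw [← sub_eq_zero, ← integral_sub hgi hfi,
    integral_eq_sub_of_hasDerivAt (fun t _ => hlog t) (hgi.sub hfi), hfab, hgab, sub_self]

noncomputable def trigPoly (a : ℕ → ℂ) (n : ℕ) (t : ℝ) : ℂ :=
  ∑ j ∈ range n, a j * exp (I * t) ^ j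

theorem hasDerivAt_exp_I_mul_pow (j : ℕ) (t : ℝ) :
    HasDerivAt (fun s : ℝ => exp (I * s) ^ j) (I * j * exp (I * t) ^ j) t := by
  have hpow (s : ℝ) : exp (I * s) ^ j = exp (I * j * s) := by
    rw [← exp_nat_mul]; ring_nf
  rw [funext hpow, hpow]
  have := ((hasDerivAt_id t).ofReal_comp.const_mul (I * j)).cexp
  simp only [id, ofReal_one, mul_one] at this
  exact this.congr_deriv (mul_comm _ _)

theorem hasDerivAt_trigPoly (a : ℕ → ℂ) (n : ℕ) (t : ℝ) :
    HasDerivAt (trigPoly a n) (trigPoly (fun j => I * j * a j) n t) t := by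
  refine (HasDerivAt.fun_sum (u := range n) fun j _ =>
    (hasDerivAt_exp_I_mul_pow j t).const_mul (a j)).congr_deriv ?_
  exact sum_congr rfl fun j _ => by ring

theorem continuous_trigPoly (a : ℕ → ℂ) (n : ℕ) : Continuous (trigPoly a n) :=
  continuous_iff_continuousAt.2 fun t => (hasDerivAt_trigPoly a n t).continuousAt

theorem trigPoly_periodic (a : ℕ → ℂ) (n : ℕ) : Function.Periodic (trigPoly a n) (2 * π) := by
  intro t
  have : exp (I * ↑(t + 2 * π)) = exp (I * t) := by
    rw [← exp_periodic (I * t)]; push_cast; ring_nf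
  simp only [trigPoly, this]

theorem trigPoly_succ (a : ℕ → ℂ) (n : ℕ) (t : ℝ) :
    trigPoly a (n + 1) t = trigPoly a n t + a n * exp (I * t) ^ n :=
  sum_range_succ _ _

theorem norm_trigPoly_le (a : ℕ → ℂ) (n : ℕ) (t : ℝ) :
    ‖trigPoly a n t‖ ≤ ∑ j ∈ range n, ‖a j‖ :=
  (norm_sum_le _ _).trans_eq <| sum_congr rfl fun j _ => by
    rw [norm_mul, norm_pow, norm_exp_I_mul_ofReal, one_pow, mul_one]

theorem integral_exp_I_mul_pow_mul_conj (j k : ℕ) :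
    ∫ t in (0)..2 * π, exp (I * t) ^ j * conj (exp (I * t) ^ k) =
      if j = k then (2 * π : ℂ) else 0 := by
  have hexp (t : ℝ) :
      exp (I * t) ^ j * conj (exp (I * t) ^ k) = exp (I * ((j : ℤ) - k : ℤ) * t) := by
    rw [map_pow, ← exp_conj, ← exp_nat_mul, ← exp_nat_mul, ← exp_add]
    simp only [map_mul, conj_I, conj_ofReal]
    push_cast; ring_nf
  simp only [hexp]
  split_ifs with hjk
  · simp [hjk]
  · have hne : I * ((j : ℤ) - k : ℤ) ≠ 0 := by
      simpa [sub_eq_zero, I_ne_zero] using hjk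
    have hper : exp (I * ((j : ℤ) - k : ℤ) * ↑(2 * π)) = 1 := by
      rw [← exp_int_mul_two_pi_mul_I ((j : ℤ) - k)]; push_cast; ring_nf
    rw [integral_exp_mul_complex hne, hper, ofReal_zero, mul_zero, exp_zero, sub_self, zero_div]

theorem integral_trigPoly_mul_conj (a b : ℕ → ℂ) (n : ℕ) :
    ∫ t in (0)..2 * π, trigPoly a n t * conj (trigPoly b n t) =
      2 * π * ∑ j ∈ range n, a j * conj (b j) := by
  have hcont (j k : ℕ) : Continuous fun t : ℝ =>
      a j * conj (b k) * (exp (I * t) ^ j * conj (exp (I * t) ^ k)) := by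
    fun_prop
  have hexpand (t : ℝ) : trigPoly a n t * conj (trigPoly b n t) = ∑ j ∈ range n, ∑ k ∈ range n,
      a j * conj (b k) * (exp (I * t) ^ j * conj (exp (I * t) ^ k)) := by
    simp only [trigPoly, map_sum, map_mul, sum_mul_sum]
    exact sum_congr rfl fun j _ => sum_congr rfl fun k _ => by ring
  simp only [hexpand]
  rw [integral_finsetSum fun j _ =>
    (continuous_finsetSum _ fun k _ => hcont j k).intervalIntegrable _ _, mul_sum]
  refine sum_congr rfl fun j hj => ?_
  rw [integral_finsetSum fun k _ => (hcont j k).intervalIntegrable _ _]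
  simp only [intervalIntegral.integral_const_mul, integral_exp_I_mul_pow_mul_conj, mul_ite,
    mul_zero, sum_ite_eq, if_pos hj]
  ring

noncomputable def windingIntegral (a : ℕ → ℂ) (n : ℕ) : ℂ :=
  ∫ t in (0)..2 * π, trigPoly (fun j => I * j * a j) n t / trigPoly a n t

theorem sum_range_natCast_sq_le (n : ℕ) : ∑ j ∈ range n, (j : ℝ) ^ 2 ≤ n ^ 3 / 3 := by
  induction n with
  | zero => simp
  | succ n ih =>
    rw [sum_range_succ]
    push_cast
    nlinarith [(n.cast_nonneg : (0 : ℝ) ≤ n)]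

theorem abs_inv_sub_self_le {r : ℝ} (hr : |r - 1| ≤ 1 / 20) : |r⁻¹ - r| ≤ 1 / 8 := by
  obtain ⟨hlo, hhi⟩ := abs_le.1 hr
  have hr0 : 0 < r := by linarith
  rw [abs_le, inv_eq_one_div, div_sub' hr0.ne', le_div_iff₀ hr0, div_le_iff₀ hr0]
  constructor <;> nlinarith

theorem norm_div_sub_mul_conj_div (w : ℂ) {z : ℂ} (hz : z ≠ 0) {s : ℝ} (hs : 0 < s) :
    ‖w / z - w * conj z / (s ^ 2 : ℝ)‖ = ‖w‖ / s * |(‖z‖ / s)⁻¹ - ‖z‖ / s| := by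
  have hz' : 0 < ‖z‖ := norm_pos_iff.2 hz
  have hid : w / z - w * conj z / (s ^ 2 : ℝ) = w * conj z * ((‖z‖ ^ 2)⁻¹ - (s ^ 2)⁻¹ : ℝ) := by
    rw [div_eq_mul_inv w z, inv_def, normSq_eq_norm_sq]
    push_cast
    ring
  have hreal : ‖z‖ * ((‖z‖ ^ 2)⁻¹ - (s ^ 2)⁻¹) = ((‖z‖ / s)⁻¹ - ‖z‖ / s) / s := by
    field_simp
  have habs := congrArg abs hreal
  rw [abs_mul, abs_norm, abs_div, abs_of_pos hs] at habs
  rw [hid, norm_mul, norm_mul, norm_real, Complex.norm_conj, Real.norm_eq_abs, mul_assoc, habs]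
  ring

theorem mul_le_of_abs_div_sub_one_le {x s : ℝ} (hs : 0 < s) (h : |x / s - 1| ≤ 1 / 20) :
    19 / 20 * s ≤ x := by
  have := (abs_le.1 h).1
  rw [le_sub_iff_add_le, le_div_iff₀ hs] at this
  linarith

section Unimodular

variable {c : ℕ → ℂ}

theorem integral_deriv_trigPoly_mul_conj (hc : ∀ j, ‖c j‖ = 1) (n : ℕ) :
    ∫ t in (0)..2 * π, trigPoly (fun j => I * j * c j) n t * conj (trigPoly c n t) =
      π * I * n * (n - 1) := by
  have hdiag (j : ℕ) : I * j * c j * conj (c j) = I * j := by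
    rw [mul_assoc, mul_conj', hc]; simp
  have hgauss : (∑ j ∈ range n, (j : ℂ)) * 2 = n * (n - 1) := by
    induction n with
    | zero => simp
    | succ n ih => rw [sum_range_succ, add_mul, ih]; push_cast; ring
  rw [integral_trigPoly_mul_conj]
  simp only [hdiag, ← mul_sum]
  linear_combination π * I * hgauss

theorem integral_norm_deriv_trigPoly_sq (hc : ∀ j, ‖c j‖ = 1) (n : ℕ) :
    ∫ t in (0)..2 * π, ‖trigPoly (fun j => I * j * c j) n t‖ ^ 2 =
      2 * π * ∑ j ∈ range n, (j : ℝ) ^ 2 := by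
  have hdiag (j : ℕ) : I * j * c j * conj (I * j * c j) = ((j : ℝ) ^ 2 : ℝ) := by
    rw [mul_conj', norm_mul, norm_mul, norm_I, hc, RCLike.norm_natCast]; push_cast; ring
  apply ofReal_injective
  rw [← intervalIntegral.integral_ofReal]
  simp only [ofReal_pow, ← mul_conj', integral_trigPoly_mul_conj, hdiag]
  push_cast
  ring

theorem integral_norm_deriv_trigPoly_le (hc : ∀ j, ‖c j‖ = 1) {n : ℕ} (hn : 0 < n) :
    ∫ t in (0)..2 * π, ‖trigPoly (fun j => I * j * c j) n t‖ ≤ 4 / 3 * π * n * √n := by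
  set L : ℝ := n * √n
  have hL : 0 < L := by positivity
  have hL2 : L ^ 2 = n ^ 3 := by rw [mul_pow, Real.sq_sqrt n.cast_nonneg]; ring
  -- AM-GM, balanced at the expected size `n^{3/2}` of `‖S'‖`
  have hamgm (x : ℝ) : x ≤ x ^ 2 / (2 * L) + L / 2 := by
    rw [div_add_div _ _ (by positivity) two_ne_zero, le_div_iff₀ (by positivity)]
    nlinarith [sq_nonneg (x - L)]
  have hS' : Continuous (trigPoly (fun j => I * j * c j) n) := continuous_trigPoly _ n
  have hsq : Continuous fun t => ‖trigPoly (fun j => I * j * c j) n t‖ ^ 2 / (2 * L) :=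
    (hS'.norm.pow 2).div_const _
  calc ∫ t in (0)..2 * π, ‖trigPoly (fun j => I * j * c j) n t‖
      ≤ ∫ t in (0)..2 * π, (‖trigPoly (fun j => I * j * c j) n t‖ ^ 2 / (2 * L) + L / 2) :=
        integral_mono_on (by positivity) (hS'.norm.intervalIntegrable _ _)
          ((hsq.add continuous_const).intervalIntegrable _ _) fun t _ => hamgm _
    _ = (2 * π * ∑ j ∈ range n, (j : ℝ) ^ 2) / (2 * L) + 2 * π * (L / 2) := by
        rw [integral_add (hsq.intervalIntegrable _ _) intervalIntegrable_const,
          intervalIntegral.integral_div, integral_norm_deriv_trigPoly_sq hc,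
          intervalIntegral.integral_const, smul_eq_mul, sub_zero]
    _ ≤ (2 * π * (n ^ 3 / 3)) / (2 * L) + 2 * π * (L / 2) := by
        gcongr; exact sum_range_natCast_sq_le n
    _ = 4 / 3 * π * n * √n := by
        rw [← hL2]; field_simp; ring

theorem norm_windingIntegral_sub_le (hc : ∀ j, ‖c j‖ = 1) {n : ℕ} (hn : 0 < n)
    (hflat : ∀ t, |‖trigPoly c n t‖ / √n - 1| ≤ 1 / 20) :
    ‖windingIntegral c n - π * I * (n - 1)‖ ≤ π * n / 6 := by
  set S := trigPoly c n
  set S' := trigPoly (fun j => I * j * c j) n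
  have hs : 0 < √n := by positivity
  have hsq : ((√n ^ 2 : ℝ) : ℂ) = n := by rw [Real.sq_sqrt n.cast_nonneg]; simp
  have hS0 (t : ℝ) : S t ≠ 0 := norm_pos_iff.1 <|
    (by positivity : (0 : ℝ) < 19 / 20 * √n).trans_le (mul_le_of_abs_div_sub_one_le hs (hflat t))
  have hcS : Continuous S := continuous_trigPoly c n
  have hcS' : Continuous S' := continuous_trigPoly _ n
  -- `S'/S` is compared with `S' conj S / n`, whose integral is known exactly
  have hpoint (t : ℝ) : ‖S' t / S t - S' t * conj (S t) / n‖ ≤ ‖S' t‖ / √n * (1 / 8) := by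
    rw [← hsq, norm_div_sub_mul_conj_div _ (hS0 t) hs]
    gcongr
    exact abs_inv_sub_self_le (hflat t)
  have hsplit : windingIntegral c n - π * I * (n - 1) =
      ∫ t in (0)..2 * π, (S' t / S t - S' t * conj (S t) / n) := by
    have hi1 : IntervalIntegrable (fun t => S' t / S t) volume 0 (2 * π) :=
      (hcS'.div hcS hS0).intervalIntegrable _ _
    have hi2 : IntervalIntegrable (fun t => S' t * conj (S t) / n) volume 0 (2 * π) :=
      (hcS'.mul (continuous_conj.comp hcS)).div_const _ |>.intervalIntegrable _ _
    rw [integral_sub hi1 hi2,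
      intervalIntegral.integral_div, integral_deriv_trigPoly_mul_conj hc]
    have : (n : ℂ) ≠ 0 := by exact_mod_cast hn.ne'
    simp only [windingIntegral, S, S']
    field_simp
  calc ‖windingIntegral c n - π * I * (n - 1)‖
      ≤ ∫ t in (0)..2 * π, ‖S' t‖ / √n * (1 / 8) := by
        rw [hsplit]
        exact norm_integral_le_of_norm_le (by positivity) (.of_forall fun t _ => hpoint t)
          ((hcS'.norm.div_const _ |>.mul continuous_const).intervalIntegrable _ _)
    _ = (∫ t in (0)..2 * π, ‖S' t‖) / √n * (1 / 8) := by
        rw [intervalIntegral.integral_mul_const, intervalIntegral.integral_div]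
    _ ≤ 4 / 3 * π * n * √n / √n * (1 / 8) := by
        gcongr; exact integral_norm_deriv_trigPoly_le hc hn
    _ = π * n / 6 := by field_simp; ring

theorem windingIntegral_succ (hc : ∀ j, ‖c j‖ = 1) {n : ℕ} (hn : 2 ≤ n)
    (hflat : ∀ t, |‖trigPoly c n t‖ / √n - 1| ≤ 1 / 20) :
    windingIntegral c (n + 1) = windingIntegral c n := by
  have hn' : (2 : ℝ) ≤ n := by exact_mod_cast hn
  have hs : 4 / 3 ≤ √n := Real.le_sqrt_of_sq_le (by linarith)
  -- the new term `c_n e^{int}` has modulus `1 < ‖S_n‖`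
  refine integral_div_eq_of_norm_sub_lt (hasDerivAt_trigPoly c n) (hasDerivAt_trigPoly c (n + 1))
    (continuous_trigPoly _ n) (continuous_trigPoly _ (n + 1))
    (trigPoly_periodic c n).eq.symm (trigPoly_periodic c (n + 1)).eq.symm fun t => ?_
  rw [trigPoly_succ, add_sub_cancel_left, norm_mul, norm_pow, norm_exp_I_mul_ofReal, hc,
    one_pow, one_mul]
  linarith [mul_le_of_abs_div_sub_one_le (by linarith) (hflat t)]

theorem windingIntegral_eq_of_le (hc : ∀ j, ‖c j‖ = 1) {N : ℕ} (hN : 2 ≤ N)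
    (hflat : ∀ n ≥ N, ∀ t, |‖trigPoly c n t‖ / √n - 1| ≤ 1 / 20) {m : ℕ} (hm : N ≤ m) :
    windingIntegral c m = windingIntegral c N := by
  induction m, hm using Nat.le_induction with
  | base => rfl
  | succ m hm ih => rw [windingIntegral_succ hc (hN.trans hm) (hflat m hm), ih]

theorem bddAbove_range_abs_norm_trigPoly_div_sub_one (hc : ∀ j, ‖c j‖ = 1) (n : ℕ) :
    BddAbove (Set.range fun t : ℝ => |‖trigPoly c n t‖ / √n - 1|) := by
  refine ⟨n / √n + 1, Set.forall_mem_range.2 fun t => abs_le.2 ⟨?_, ?_⟩⟩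
  · have : 0 ≤ ‖trigPoly c n t‖ / √n := by positivity
    have : 0 ≤ (n : ℝ) / √n := by positivity
    linarith
  · have : ‖trigPoly c n t‖ ≤ n := by simpa [hc] using norm_trigPoly_le c n t
    have : ‖trigPoly c n t‖ / √n ≤ n / √n := by gcongr
    linarith

end Unimodular

theorem eventually_forall_le_of_tendsto_iSup {α ι : Type*} {l : Filter α} {F : α → ι → ℝ}
    {a ε : ℝ} (h : Tendsto (fun x => ⨆ i, F x i) l (nhds a))
    (hF : ∀ x, BddAbove (Set.range (F x))) (hε : a < ε) : ∀ᶠ x in l, ∀ i, F x i ≤ ε :=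
  (h.eventually (ge_mem_nhds hε)).mono fun x hx i => (le_ciSup (hF x) i).trans hx

theorem norm_one_div_sqrt_mul (n : ℕ) (z : ℂ) : ‖(1 / (√n : ℂ)) * z‖ = ‖z‖ / √n := by
  rw [norm_mul, norm_div, norm_one, norm_real, Real.norm_of_nonneg (Real.sqrt_nonneg _),
    one_div_mul_eq_div]

/-- For any sequence `c` of unimodular complex numbers, the
uniform unimodular polynomials `P_n(z) = (1/√n) ∑_{j=0}^{n-1} c_j z^j`
(evaluated at `z = e^{it}`) are not ultraflat:
`sup_{z ∈ S¹} ||P_n(z)| - 1|` does not tend to `0`. -/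
theorem statement2
    (c : ℕ → ℂ) (hc : ∀ j : ℕ, ‖c j‖ = 1) :
    ¬ Tendsto
        (fun n : ℕ =>
          ⨆ t : ℝ,
            |‖
                ((1 / (Real.sqrt n : ℂ)) *
                  ∑ j ∈ Finset.range n, c j * Complex.exp (Complex.I * (t : ℂ)) ^ j)‖ - 1|)
        atTop (nhds 0) := by
  intro hlim
  simp only [norm_one_div_sqrt_mul] at hlim
  obtain ⟨N, hN⟩ := eventually_atTop.1
    (eventually_forall_le_of_tendsto_iSup hlim (bddAbove_range_abs_norm_trigPoly_div_sub_one hc)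
      (by norm_num : (0 : ℝ) < 1 / 20))
  set M := max N 2
  have hflat : ∀ n ≥ M, ∀ t, |‖trigPoly c n t‖ / √n - 1| ≤ 1 / 20 :=
    fun n hn => hN n (le_of_max_le_left hn)
  have hM : (0 : ℝ) < M := by positivity
  have h1 := norm_windingIntegral_sub_le hc (by omega) (hflat M le_rfl)
  have h2 := norm_windingIntegral_sub_le hc (by omega) (hflat (2 * M) (by omega))
  rw [windingIntegral_eq_of_le hc (le_max_right N 2) hflat (by omega : M ≤ 2 * M)] at h2
  have hgap : π * M ≤ π * (2 * M : ℕ) / 6 + π * M / 6 := calc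
    π * M = ‖(windingIntegral c M - π * I * ((2 * M : ℕ) - 1)) -
        (windingIntegral c M - π * I * (M - 1))‖ := by
      rw [show (windingIntegral c M - π * I * ((2 * M : ℕ) - 1)) -
          (windingIntegral c M - π * I * (M - 1)) = ((π * M : ℝ) : ℂ) * -I by push_cast; ring,
        norm_mul, norm_neg, norm_I, mul_one, norm_real, Real.norm_of_nonneg (by positivity)]
    _ ≤ π * (2 * M : ℕ) / 6 + π * M / 6 := (norm_sub_le _ _).trans (add_le_add h2 h1)
  push_cast at hgap
  nlinarith [Real.pi_pos]
end

section
/- (Newman's L⁴ lemma for Gauss sums.) There exists a constant C > 0 such that for every n ≥ 1, | ∫_{S¹} |∑_{j=0}^{n−1} e^{iπj²/n} z^j|⁴ dz − n² | ≤ C n^{3/2}; equivalently, ‖∑_{j=0}^{n−1} e^{iπj²/n} z^j‖₄⁴ = n² + O(n^{3/2}). -/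
/-!
Write `a_j = e^{iπj²/n}` and let `γ(h) = ∑_{j-k=h} a_j ā_k` be the autocorrelation of the
coefficients. Since `|P|⁴ = |P P̄|²` and `P P̄ = ∑_h γ(h) z^h`, Parseval gives
`‖P‖₄⁴ = ∑_h |γ(h)|²`, and `γ(0) = n`, `|γ(-h)| = |γ(h)|` because `|a_j| = 1`.

For `0 < h < n` the quadratic phase makes `a_{k+h} ā_k = a_h ζ^{hk}` with `ζ = e^{2πi/n}`, so
`γ(h)` is a geometric sum: `|γ(h)| |ζ^h - 1| = |ζ^{h(n-h)} - 1|`. Using `ζ^n = 1`, the same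
identity holds with `h` replaced by `m = min(h, n - h)` on the left and `ζ^{m²}` on the right.
Jordan's inequality `|ζ^m - 1| ≥ 4m/n` then gives `|γ(h)|² ≤ min(n²/4m², π²m²/4)`; summing the
second bound over `m ≤ √n` and the first over `m > √n` gives `O(n^{3/2})`.
-/

open Filter MeasureTheory Finset

open Complex ComplexConjugate
open scoped Real

section Autocorrelation

variable (c : ℕ → ℂ) (n : ℕ)

noncomputable def autocorr (h : ℤ) : ℂ :=
  ∑ p ∈ (range n ×ˢ range n).filter (fun p => (p.1 : ℤ) - p.2 = h), c p.1 * conj (c p.2)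

lemma autocorr_neg (h : ℤ) : autocorr c n (-h) = conj (autocorr c n h) := by
  rw [autocorr, autocorr, map_sum]
  refine sum_nbij' Prod.swap Prod.swap ?_ ?_ (fun _ _ => rfl) (fun _ _ => rfl) ?_
  · intro p hp
    simp only [mem_filter, mem_product, mem_range, Prod.fst_swap, Prod.snd_swap] at hp ⊢; omega
  · intro p hp
    simp only [mem_filter, mem_product, mem_range, Prod.fst_swap, Prod.snd_swap] at hp ⊢; omega
  · intro p _; simp [mul_comm]

lemma autocorr_natCast (h : ℕ) :
    autocorr c n h = ∑ k ∈ range (n - h), c (k + h) * conj (c k) := by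
  rw [autocorr]
  refine sum_nbij' Prod.snd (fun k => (k + h, k)) ?_ ?_ ?_ (fun _ _ => rfl) ?_
  · simp only [mem_filter, mem_product, mem_range]; omega
  · simp only [mem_filter, mem_product, mem_range]; omega
  · simp only [mem_filter, mem_product, mem_range]
    intro p hp; ext <;> simp only; omega
  · simp only [mem_filter, mem_product, mem_range]
    intro p hp; rw [show p.1 = p.2 + h by omega]

lemma autocorr_zero_of_norm_eq_one (hc : ∀ j, ‖c j‖ = 1) : autocorr c n 0 = n := by
  simpa [mul_conj', hc] using autocorr_natCast c n 0

lemma sum_mul_conj_sum_eq_sum_autocorr {w : ℂ} (hw : ‖w‖ = 1) :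
    (∑ j ∈ range n, c j * w ^ j) * conj (∑ j ∈ range n, c j * w ^ j) =
      ∑ h ∈ Icc (1 - n : ℤ) (n - 1), autocorr c n h * w ^ h := by
  have hw0 : w ≠ 0 := by rintro rfl; simp at hw
  have hpair : ∀ p : ℕ × ℕ, c p.1 * w ^ p.1 * conj (c p.2 * w ^ p.2) =
      c p.1 * conj (c p.2) * w ^ ((p.1 : ℤ) - p.2) := by
    intro p
    rw [map_mul, map_pow, ← Complex.inv_eq_conj hw, zpow_sub₀ hw0, zpow_natCast, zpow_natCast]
    ring
  rw [map_sum, sum_mul_sum, ← sum_product' (f := fun i j => c i * w ^ i * conj (c j * w ^ j))]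
  simp_rw [hpair]
  rw [← sum_fiberwise_of_maps_to (g := fun p : ℕ × ℕ => (p.1 : ℤ) - p.2)
    (t := Icc (1 - n : ℤ) (n - 1))]
  · refine sum_congr rfl fun h _ => ?_
    rw [autocorr, sum_mul]
    refine sum_congr rfl fun p hp => ?_
    rw [(mem_filter.1 hp).2]
  · simp only [mem_product, mem_range, mem_Icc]; omega

end Autocorrelation

lemma norm_exp_I_mul (t : ℝ) : ‖exp (I * t)‖ = 1 := by
  rw [mul_comm]; exact norm_exp_ofReal_mul_I t

lemma exp_I_mul_zpow (t : ℝ) (m : ℤ) : exp (I * t) ^ m = exp ((m * I) * t) := by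
  rw [← exp_int_mul]; ring_nf

lemma integral_exp_I_mul_zpow (m : ℤ) :
    ∫ t in (0:ℝ)..2 * π, exp (I * t) ^ m = if m = 0 then (2 * π : ℂ) else 0 := by
  split_ifs with hm
  · simp [hm]
  have hmI : (m * I : ℂ) ≠ 0 := mul_ne_zero (Int.cast_ne_zero.2 hm) I_ne_zero
  simp_rw [exp_I_mul_zpow]
  rw [integral_exp_mul_complex hmI]
  have : (m * I : ℂ) * ↑(2 * π) = m * (2 * π * I) := by push_cast; ring
  rw [this, exp_int_mul_two_pi_mul_I]
  simp

lemma average_norm_sq_sum_zpow (s : Finset ℤ) (b : ℤ → ℂ) :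
    1 / (2 * π) * ∫ t in (0:ℝ)..2 * π, ‖∑ h ∈ s, b h * exp (I * t) ^ h‖ ^ 2 =
      ∑ h ∈ s, ‖b h‖ ^ 2 := by
  have hexpand : ∀ t : ℝ, ((‖∑ h ∈ s, b h * exp (I * t) ^ h‖ ^ 2 : ℝ) : ℂ) =
      ∑ h ∈ s, ∑ k ∈ s, b h * conj (b k) * exp (I * t) ^ (h - k) := by
    intro t
    have hw := norm_exp_I_mul t
    have hw0 : exp (I * t) ≠ 0 := exp_ne_zero _
    rw [ofReal_pow, ← mul_conj', map_sum, sum_mul_sum]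
    refine sum_congr rfl fun h _ => sum_congr rfl fun k _ => ?_
    rw [map_mul, map_zpow₀, ← Complex.inv_eq_conj hw, zpow_sub₀ hw0, inv_zpow]
    ring
  have hcont : ∀ h k : ℤ, Continuous fun t : ℝ => b h * conj (b k) * exp (I * t) ^ (h - k) := by
    intro h k
    simp_rw [exp_I_mul_zpow]
    fun_prop
  apply ofReal_injective
  rw [ofReal_mul, ← intervalIntegral.integral_ofReal]
  simp_rw [hexpand]
  rw [intervalIntegral.integral_finsetSum fun h _ =>
    (continuous_finsetSum _ fun k _ => hcont h k).intervalIntegrable _ _]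
  simp_rw [intervalIntegral.integral_finsetSum fun k _ => (hcont _ k).intervalIntegrable _ _,
    intervalIntegral.integral_const_mul, integral_exp_I_mul_zpow, sub_eq_zero, mul_ite, mul_zero,
    sum_ite_eq]
  rw [sum_congr rfl fun h hh => if_pos hh, ofReal_sum, mul_sum]
  refine sum_congr rfl fun h _ => ?_
  rw [mul_conj']
  push_cast
  field_simp

lemma average_norm_pow_four_eq_sum_norm_sq_autocorr (c : ℕ → ℂ) (n : ℕ) :
    1 / (2 * π) * ∫ t in (0:ℝ)..2 * π, ‖∑ j ∈ range n, c j * exp (I * t) ^ j‖ ^ 4 =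
      ∑ h ∈ Icc (1 - n : ℤ) (n - 1), ‖autocorr c n h‖ ^ 2 := by
  have hsq : ∀ t : ℝ, ‖∑ j ∈ range n, c j * exp (I * t) ^ j‖ ^ 4 =
      ‖∑ h ∈ Icc (1 - n : ℤ) (n - 1), autocorr c n h * exp (I * t) ^ h‖ ^ 2 := by
    intro t
    rw [← sum_mul_conj_sum_eq_sum_autocorr c n (norm_exp_I_mul t), mul_conj', norm_pow,
      norm_real, norm_norm]
    ring
  simp_rw [hsq]
  exact average_norm_sq_sum_zpow _ _

lemma sum_Icc_eq_add_two_nsmul_sum_Ico {M : Type*} [AddCommMonoid M] {f : ℤ → M}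
    (hf : ∀ h, f (-h) = f h) {n : ℕ} (hn : 1 ≤ n) :
    ∑ h ∈ Icc (1 - n : ℤ) (n - 1), f h = f 0 + 2 • ∑ h ∈ Ico 1 n, f h := by
  induction n, hn using Nat.le_induction with
  | base => simp
  | succ n hn ih =>
    have hIcc : Icc (1 - (n + 1 : ℕ) : ℤ) ((n + 1 : ℕ) - 1) =
        insert (-n : ℤ) (insert (n : ℤ) (Icc (1 - n : ℤ) (n - 1))) := by
      ext h; simp only [mem_insert, mem_Icc]; omega
    rw [hIcc, sum_insert (by simp only [mem_insert, mem_Icc]; omega),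
      sum_insert (by simp only [mem_Icc]; omega), ih, sum_Ico_succ_top hn, hf,
      smul_add]
    abel

lemma norm_sub_one_eq_of_mul_eq_one {𝕜 : Type*} [NormedDivisionRing 𝕜] {x y : 𝕜}
    (hx : ‖x‖ = 1) (hxy : x * y = 1) : ‖x - 1‖ = ‖y - 1‖ := by
  calc ‖x - 1‖ = ‖x * (1 - y)‖ := by rw [mul_sub, hxy, mul_one]
    _ = ‖y - 1‖ := by rw [norm_mul, hx, one_mul, norm_sub_rev]

section GaussSum

variable (n : ℕ)

noncomputable def gaussCoeff (j : ℕ) : ℂ := exp (I * π * j ^ 2 / n)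

lemma norm_gaussCoeff (j : ℕ) : ‖gaussCoeff n j‖ = 1 := by
  rw [gaussCoeff, show I * π * j ^ 2 / n = ((π * j ^ 2 / n : ℝ) : ℂ) * I by push_cast; ring,
    norm_exp_ofReal_mul_I]

lemma exp_two_pi_I_div_pow (k : ℕ) :
    exp (2 * π * I / n) ^ k = exp (I * ↑(2 * π * k / n)) := by
  rw [← exp_nat_mul]; push_cast; ring_nf

lemma norm_exp_two_pi_I_div : ‖exp (2 * π * I / n)‖ = 1 := by
  have := exp_two_pi_I_div_pow n 1
  rw [pow_one] at this
  rw [this, mul_comm, norm_exp_ofReal_mul_I]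

lemma exp_two_pi_I_div_pow_self : exp (2 * π * I / n) ^ n = 1 := by
  rcases eq_or_ne n 0 with rfl | hn
  · simp
  rw [← exp_nat_mul, mul_div_cancel₀ _ (Nat.cast_ne_zero.2 hn), exp_two_pi_mul_I]

lemma gaussCoeff_add_mul_conj (k h : ℕ) :
    gaussCoeff n (k + h) * conj (gaussCoeff n k) =
      gaussCoeff n h * (exp (2 * π * I / n) ^ h) ^ k := by
  rw [← Complex.inv_eq_conj (norm_gaussCoeff n k), gaussCoeff, gaussCoeff, gaussCoeff,
    ← exp_neg, ← exp_add, ← pow_mul, ← exp_nat_mul, ← exp_add]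
  congr 1
  push_cast
  ring

lemma autocorr_gaussCoeff_natCast (h : ℕ) :
    autocorr (gaussCoeff n) n h =
      gaussCoeff n h * ∑ k ∈ range (n - h), (exp (2 * π * I / n) ^ h) ^ k := by
  rw [autocorr_natCast, mul_sum]
  exact sum_congr rfl fun k _ => gaussCoeff_add_mul_conj n k h

lemma norm_autocorr_gaussCoeff_mul (h : ℕ) :
    ‖autocorr (gaussCoeff n) n h‖ * ‖exp (2 * π * I / n) ^ h - 1‖ =
      ‖exp (2 * π * I / n) ^ (h * (n - h)) - 1‖ := by
  rw [autocorr_gaussCoeff_natCast, ← norm_mul, mul_assoc, geom_sum_mul, norm_mul,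
    norm_gaussCoeff, one_mul, ← pow_mul]

lemma norm_exp_two_pi_I_div_pow_sub_one_le (k : ℕ) :
    ‖exp (2 * π * I / n) ^ k - 1‖ ≤ 2 * π * k / n := by
  rw [exp_two_pi_I_div_pow]
  refine Real.norm_exp_I_mul_ofReal_sub_one_le.trans_eq (Real.norm_of_nonneg ?_)
  positivity

lemma le_norm_exp_two_pi_I_div_pow_sub_one {m : ℕ} (hm : 2 * m ≤ n) :
    4 * m / n ≤ ‖exp (2 * π * I / n) ^ m - 1‖ := by
  rw [exp_two_pi_I_div_pow, norm_exp_I_mul_ofReal_sub_one]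
  have hangle : 2 * π * m / n / 2 = π * m / n := by ring
  have hle : π * m / n ≤ π / 2 := by
    rcases eq_or_ne n 0 with rfl | hn
    · simp only [CharP.cast_eq_zero, div_zero]
      positivity
    rw [div_le_div_iff₀ (by positivity) two_pos]
    have : (2 * m : ℝ) ≤ n := by exact_mod_cast hm
    nlinarith [Real.pi_pos]
  have hsin := Real.mul_le_sin (by positivity) hle
  have hsin_nonneg : 0 ≤ Real.sin (π * m / n) := (by positivity : (0:ℝ) ≤ 2 / π * _).trans hsin
  rw [hangle, Real.norm_eq_abs, abs_mul, abs_two, abs_of_nonneg hsin_nonneg]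
  calc (4 * m / n : ℝ) = 2 * (2 / π * (π * m / n)) := by field_simp; ring
    _ ≤ 2 * Real.sin (π * m / n) := by gcongr

noncomputable def gaussBound (m : ℕ) : ℝ := min ((n : ℝ) ^ 2 / (4 * m ^ 2)) (π ^ 2 * m ^ 2 / 4)

lemma gaussBound_nonneg (m : ℕ) : 0 ≤ gaussBound n m := by
  unfold gaussBound; positivity

lemma norm_autocorr_gaussCoeff_mul_of_add_eq {h r m : ℕ} (hhr : h + r = n)
    (hm : m = h ∨ m = r) :
    ‖autocorr (gaussCoeff n) n h‖ * ‖exp (2 * π * I / n) ^ m - 1‖ =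
      ‖exp (2 * π * I / n) ^ (m ^ 2) - 1‖ := by
  set ζ := exp (2 * π * I / n)
  have hζn : ζ ^ n = 1 := exp_two_pi_I_div_pow_self n
  have hpow : ∀ k, ‖ζ ^ k‖ = 1 := fun k => by rw [norm_pow, norm_exp_two_pi_I_div, one_pow]
  have hden : ‖ζ ^ h - 1‖ = ‖ζ ^ m - 1‖ := by
    rcases hm with rfl | rfl
    · rfl
    · exact norm_sub_one_eq_of_mul_eq_one (hpow h) (by rw [← pow_add, hhr, hζn])
  have hnum : ‖ζ ^ (h * (n - h)) - 1‖ = ‖ζ ^ (m ^ 2) - 1‖ := by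
    rw [show n - h = r by omega]
    refine norm_sub_one_eq_of_mul_eq_one (hpow _) ?_
    rw [← pow_add]
    rcases hm with rfl | rfl
    · rw [show m * r + m ^ 2 = n * m by rw [← hhr]; ring, pow_mul, hζn, one_pow]
    · rw [show h * m + m ^ 2 = n * m by rw [← hhr]; ring, pow_mul, hζn, one_pow]
  rw [← hden, ← hnum, norm_autocorr_gaussCoeff_mul]

lemma norm_sq_autocorr_gaussCoeff_le {h r m : ℕ} (hhr : h + r = n) (hm : m = h ∨ m = r)
    (hm_pos : 1 ≤ m) (hmn : 2 * m ≤ n) :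
    ‖autocorr (gaussCoeff n) n h‖ ^ 2 ≤ gaussBound n m := by
  have hD_pos : (0 : ℝ) < 4 * m / n := by
    have : (1 : ℝ) ≤ m := by exact_mod_cast hm_pos
    have : (2 : ℝ) ≤ n := by exact_mod_cast (by omega : 2 ≤ n)
    positivity
  have hmul : ‖autocorr (gaussCoeff n) n h‖ * (4 * m / n) ≤
      ‖exp (2 * π * I / n) ^ (m ^ 2) - 1‖ := by
    rw [← norm_autocorr_gaussCoeff_mul_of_add_eq n hhr hm]
    exact mul_le_mul_of_nonneg_left (le_norm_exp_two_pi_I_div_pow_sub_one n hmn) (norm_nonneg _)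
  have hN_le_two : ‖exp (2 * π * I / n) ^ (m ^ 2) - 1‖ ≤ 2 := by
    refine (norm_sub_le _ _).trans_eq ?_
    rw [norm_pow, norm_exp_two_pi_I_div, one_pow, norm_one]; norm_num
  have hm0 : (m : ℝ) ≠ 0 := by positivity
  have hn0 : (n : ℝ) ≠ 0 := by exact_mod_cast (by omega : n ≠ 0)
  refine le_min ?_ ?_
  · rw [show (n : ℝ) ^ 2 / (4 * m ^ 2) = (2 / (4 * m / n)) ^ 2 by field_simp; ring]
    gcongr
    rw [le_div_iff₀ hD_pos]
    exact hmul.trans hN_le_two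
  · rw [show π ^ 2 * m ^ 2 / 4 = (2 * π * ↑(m ^ 2) / n / (4 * m / n)) ^ 2 by
      push_cast; field_simp; ring]
    gcongr
    rw [le_div_iff₀ hD_pos]
    exact hmul.trans (norm_exp_two_pi_I_div_pow_sub_one_le n (m ^ 2))

lemma sum_norm_sq_autocorr_gaussCoeff_le :
    ∑ h ∈ Ico 1 n, ‖autocorr (gaussCoeff n) n h‖ ^ 2 ≤ 2 * ∑ m ∈ Ico 1 n, gaussBound n m := by
  calc ∑ h ∈ Ico 1 n, ‖autocorr (gaussCoeff n) n h‖ ^ 2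
      ≤ ∑ h ∈ Ico 1 n, (gaussBound n h + gaussBound n (n - h)) := by
        refine sum_le_sum fun h hh => ?_
        rw [mem_Ico] at hh
        rcases le_total h (n - h) with hle | hle
        · exact (norm_sq_autocorr_gaussCoeff_le n (r := n - h) (by omega) (.inl rfl) hh.1
            (by omega)).trans (le_add_of_nonneg_right (gaussBound_nonneg n (n - h)))
        · exact (norm_sq_autocorr_gaussCoeff_le n (r := n - h) (by omega) (.inr rfl) (by omega)
            (by omega)).trans (le_add_of_nonneg_left (gaussBound_nonneg n h))
    _ = 2 * ∑ m ∈ Ico 1 n, gaussBound n m := by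
        rw [sum_add_distrib, sum_Ico_reflect _ _ (Nat.le_succ n), Nat.add_sub_cancel,
          Nat.add_sub_cancel_left, two_mul]

lemma sum_gaussBound_le : ∑ m ∈ Ico 1 n, gaussBound n m ≤ (π ^ 2 / 4 + 1 / 2) * (n * √n) := by
  set M := Nat.sqrt n
  rw [← sum_filter_add_sum_filter_not _ (· ≤ M), add_mul]
  gcongr
  · have hcard : #((Ico 1 n).filter (· ≤ M)) ≤ M := by
      refine (card_le_card fun m hm => ?_).trans_eq (Nat.card_Icc 1 M)
      simp only [mem_filter, mem_Ico, mem_Icc] at hm ⊢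
      omega
    have hterm : ∀ m ∈ (Ico 1 n).filter (· ≤ M), gaussBound n m ≤ π ^ 2 * n / 4 := by
      intro m hm
      have hmM : m ^ 2 ≤ n := (Nat.pow_le_pow_left (mem_filter.1 hm).2 2).trans (Nat.sqrt_le' n)
      refine (min_le_right _ _).trans ?_
      gcongr
      exact_mod_cast hmM
    calc ∑ m ∈ (Ico 1 n).filter (· ≤ M), gaussBound n m
        ≤ #((Ico 1 n).filter (· ≤ M)) • (π ^ 2 * n / 4) := sum_le_card_nsmul _ _ _ hterm
      _ ≤ M * (π ^ 2 * n / 4) := by rw [nsmul_eq_mul]; gcongr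
      _ ≤ π ^ 2 / 4 * (n * √n) := by
          rw [show π ^ 2 / 4 * (n * √n) = √n * (π ^ 2 * n / 4) by ring]
          gcongr
          exact Real.nat_sqrt_le_real_sqrt
  · calc ∑ m ∈ (Ico 1 n).filter (¬ · ≤ M), gaussBound n m
        ≤ ∑ m ∈ Ioo M n, (n : ℝ) ^ 2 / 4 * ((m : ℝ) ^ 2)⁻¹ := by
          refine (sum_le_sum (g := fun m : ℕ => (n : ℝ) ^ 2 / 4 * ((m : ℝ) ^ 2)⁻¹)
            fun m _ => (min_le_left _ _).trans_eq (by ring)).trans ?_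
          refine sum_le_sum_of_subset_of_nonneg (fun m hm => ?_) (fun m _ _ => by positivity)
          simp only [mem_filter, mem_Ico, mem_Ioo] at hm ⊢
          omega
      _ ≤ (n : ℝ) ^ 2 / 4 * (2 / (M + 1)) := by
          rw [← mul_sum]
          gcongr
          exact sum_Ioo_inv_sq_le M n
      _ ≤ 1 / 2 * (n * √n) := by
          rcases eq_or_ne n 0 with rfl | hn
          · simp
          have hsqrt : 0 < √(n : ℝ) := Real.sqrt_pos.2 (by positivity)
          calc (n : ℝ) ^ 2 / 4 * (2 / (M + 1)) ≤ (n : ℝ) ^ 2 / 4 * (2 / √n) := by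
                gcongr
                exact Real.real_sqrt_lt_nat_sqrt_succ.le
            _ = 1 / 2 * (n * √n) := by
                field_simp
                rw [Real.sq_sqrt (by positivity)]
                ring

end GaussSum

/-- **Newman's `L⁴` lemma for Gauss sums.** There is `C > 0` such
that for all `n ≥ 1`,
`| ∫_{S¹} |∑_{j<n} e^{iπj²/n} z^j|⁴ dz - n² | ≤ C n^{3/2}`. -/
theorem statement16 :
    ∃ C : ℝ, 0 < C ∧
      ∀ n : ℕ, 1 ≤ n →
        |(1 / (2 * Real.pi)) *
            (∫ t in (0:ℝ)..(2 * Real.pi),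
              ‖(∑ j ∈ Finset.range n,
                    Complex.exp (Complex.I * (Real.pi : ℂ) * (j : ℂ) ^ 2 / (n : ℂ)) *
                      Complex.exp (Complex.I * (t : ℂ)) ^ j)‖ ^ 4) -
          (n : ℝ) ^ 2| ≤ C * (n : ℝ) ^ ((3:ℝ) / 2) := by
  refine ⟨π ^ 2 + 2, by positivity, fun n hn => ?_⟩
  simp only [← gaussCoeff.eq_1]
  rw [average_norm_pow_four_eq_sum_norm_sq_autocorr,
    sum_Icc_eq_add_two_nsmul_sum_Ico (fun h => by rw [autocorr_neg, RCLike.norm_conj]) hn,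
    autocorr_zero_of_norm_eq_one _ _ (norm_gaussCoeff n), norm_natCast, two_nsmul,
    add_sub_cancel_left, abs_of_nonneg (by positivity),
    show (n : ℝ) ^ ((3:ℝ) / 2) = n * √n by
      rw [Real.sqrt_eq_rpow, ← Real.rpow_one_add' (by positivity) (by norm_num)]; norm_num]
  linarith [sum_norm_sq_autocorr_gaussCoeff_le n, sum_gaussBound_le n]
end
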